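/- Let d be a positive squarefree integer with d ≡ 1 (mod 4), n ≥ 1, and let R = ℤ[√-d]/(4) with σ : R → R the ring endomorphism induced by conjugation σ(a+b√-d) = a-b√-d. Let M be the (n+1)×(n+1) diagonal matrix diag(1,…,1,-2). Then the number of matrices B ∈ M_{n+1}(R) satisfying B·M + M·σ(B)ᵀ = 0 and trace(B) = 0 equals 2^{2n²+5n}. -/
import Mathlib
set_option synthInstance.maxHeartbeats 1000000
set_option maxHeartbeats 1000000


open Matrix

/-- The quotient ring `ℤ[√-d]/(m)`. -/
abbrev Rq (d m : ℤ) : Type := Zsqrtd (-d) ⧸ Ideal.span {(m : Zsqrtd (-d))}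

/-- Conjugation `a + b√-d ↦ a - b√-d` descends to the quotient `ℤ[√-d]/(m)`. -/
noncomputable def conjQ (d m : ℤ) : Rq d m →+* Rq d m :=
  Ideal.quotientMap (Ideal.span {(m : Zsqrtd (-d))}) (starRingEnd (Zsqrtd (-d)))
    (by
      rw [Ideal.span_singleton_le_iff_mem, Ideal.mem_comap, map_intCast]
      exact Ideal.mem_span_singleton_self _)

/-- The diagonal matrix `diag(1, …, 1, -2)` of size `n+1`. -/
def Mmat (R : Type*) [Ring R] (n : ℕ) : Matrix (Fin (n + 1)) (Fin (n + 1)) R :=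
  Matrix.diagonal fun i => if i = Fin.last n then -2 else 1

variable {d : ℤ}

lemma conjQ_mk (x : Zsqrtd (-d)) :
    conjQ d 4 (Ideal.Quotient.mk _ x) = Ideal.Quotient.mk _ (star x) :=
  Ideal.quotientMap_mk

lemma conjQ_conjQ (x : Rq d 4) : conjQ d 4 (conjQ d 4 x) = x := by
  obtain ⟨y, rfl⟩ := Ideal.Quotient.mk_surjective x
  rw [conjQ_mk, conjQ_mk, star_star]

lemma conjQ_two_mul (x : Rq d 4) : conjQ d 4 (2 * x) = 2 * conjQ d 4 x := by
  have h2 : conjQ d 4 2 = 2 := by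
    rw [show (2 : Rq d 4) = 1 + 1 by norm_num, map_add, _root_.map_one]
  rw [_root_.map_mul, h2]

lemma mem_span4_iff (x : Zsqrtd (-d)) :
    x ∈ Ideal.span {(((4:ℤ)) : Zsqrtd (-d))} ↔ (4:ℤ) ∣ x.re ∧ (4:ℤ) ∣ x.im := by
  rw [Ideal.mem_span_singleton]
  constructor
  · rintro ⟨c, rfl⟩
    exact ⟨⟨c.re, by simp [Zsqrtd.re_mul]⟩, ⟨c.im, by simp [Zsqrtd.im_mul]⟩⟩
  · rintro ⟨⟨a, ha⟩, ⟨b, hb⟩⟩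
    exact ⟨⟨a, b⟩, by ext <;> simp [Zsqrtd.re_mul, Zsqrtd.im_mul, ha, hb]⟩

noncomputable def psi (d : ℤ) : ZMod 4 × ZMod 4 → Rq d 4 :=
  fun p => Ideal.Quotient.mk _ ⟨(p.1.val : ℤ), (p.2.val : ℤ)⟩

lemma psi_bij : Function.Bijective (psi d) := by
  constructor
  · rintro ⟨a, b⟩ ⟨a', b'⟩ h
    simp only [psi, Ideal.Quotient.eq, mem_span4_iff] at h
    obtain ⟨h1, h2⟩ := h
    simp only [Zsqrtd.re_sub, Zsqrtd.im_sub] at h1 h2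
    have := a.val_lt; have := a'.val_lt; have := b.val_lt; have := b'.val_lt
    have ea : a = a' := ZMod.val_injective _ (by omega)
    have eb : b = b' := ZMod.val_injective _ (by omega)
    simp [ea, eb]
  · intro x
    obtain ⟨⟨a, b⟩, rfl⟩ := Ideal.Quotient.mk_surjective x
    refine ⟨((a : ZMod 4), (b : ZMod 4)), ?_⟩
    rw [psi, Ideal.Quotient.eq, mem_span4_iff]
    have ha := ZMod.val_intCast (n := 4) a
    have hb := ZMod.val_intCast (n := 4) b
    constructor <;> simp only [Zsqrtd.re_sub, Zsqrtd.im_sub] <;> omega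

noncomputable def psiEquiv (d : ℤ) : ZMod 4 × ZMod 4 ≃ Rq d 4 := Equiv.ofBijective _ psi_bij

lemma psi_add (p q : ZMod 4 × ZMod 4) : psi d (p + q) = psi d p + psi d q := by
  simp only [psi]
  rw [← RingHom.map_add, Ideal.Quotient.eq, mem_span4_iff]
  have h1 := ZMod.val_add p.1 q.1
  have h2 := ZMod.val_add p.2 q.2
  constructor <;> simp only [Zsqrtd.re_sub, Zsqrtd.im_sub, Zsqrtd.re_add, Zsqrtd.im_add,
    Prod.fst_add, Prod.snd_add] <;> omega

lemma psi_zero : psi d 0 = 0 := by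
  have h : (⟨(((0:ZMod 4)).val : ℤ), (((0:ZMod 4)).val : ℤ)⟩ : Zsqrtd (-d)) = 0 := by
    ext <;> rfl
  rw [psi]
  exact h ▸ (RingHom.map_zero _)

lemma psi_eq_zero_iff (p : ZMod 4 × ZMod 4) : psi d p = 0 ↔ p = 0 := by
  constructor
  · intro h
    apply psi_bij.1 (a₁ := p) (a₂ := 0)
    rw [h, psi_zero]
  · rintro rfl; exact psi_zero

lemma conjQ_psi (p : ZMod 4 × ZMod 4) : conjQ d 4 (psi d p) = psi d (p.1, -p.2) := by
  rw [psi, psi, conjQ_mk, Zsqrtd.star_mk, Ideal.Quotient.eq, mem_span4_iff]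
  have h1 := ZMod.val_lt p.2
  have h2 := ZMod.val_lt (-p.2)
  have : ((- p.2).val + p.2.val) % 4 = 0 := by
    rw [← ZMod.val_add]; simp
  constructor <;> simp only [Zsqrtd.re_sub, Zsqrtd.im_sub] <;> omega

lemma card_R : Nat.card (Rq d 4) = 16 := by
  rw [← Nat.card_eq_of_bijective _ psi_bij]
  simp [Nat.card_eq_fintype_card]

lemma card_S : Nat.card {x : Rq d 4 // x + conjQ d 4 x = 0} = 8 := by
  have key : ∀ p : ZMod 4 × ZMod 4, 2 * p.1 = 0 ↔ (psiEquiv d p + conjQ d 4 (psiEquiv d p) = 0) := by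
    intro p
    have hpe : (psiEquiv d) p = psi d p := rfl
    rw [hpe, conjQ_psi, ← psi_add]
    have hq : p + (p.1, -p.2) = (2 * p.1, 0) := by
      ext <;> simp [two_mul]
    rw [hq, psi_eq_zero_iff]
    constructor
    · intro h; simp [h]
    · intro h; exact congrArg Prod.fst h
  have e := (psiEquiv d).subtypeEquiv
    (p := fun p => 2 * p.1 = 0) (q := fun x => x + conjQ d 4 x = 0) key
  rw [← Nat.card_congr e, Nat.card_eq_fintype_card]
  decide

section main
variable (d) (n : ℕ)

/-- entrywise characterization of the matrix equation -/
lemma sol_iff (B : Matrix (Fin (n+1)) (Fin (n+1)) (Rq d 4)) :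
    B * Mmat (Rq d 4) n + Mmat (Rq d 4) n * (B.map (conjQ d 4))ᵀ = 0 ↔
    ∀ i j, B i j * (if j = Fin.last n then -2 else 1)
      + (if i = Fin.last n then -2 else 1) * conjQ d 4 (B j i) = 0 := by
  constructor
  · intro h i j
    have := congrFun (congrFun h i) j
    simpa [Mmat, Matrix.mul_diagonal, Matrix.diagonal_mul, Matrix.add_apply,
      Matrix.map_apply, Matrix.transpose_apply] using this
  · intro h
    ext i j
    simpa [Mmat, Matrix.mul_diagonal, Matrix.diagonal_mul, Matrix.add_apply,
      Matrix.map_apply, Matrix.transpose_apply] using h i j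

noncomputable def buildB (f : {p : Fin (n+1) × Fin (n+1) // p.1 < p.2} → Rq d 4)
    (g : Fin n → {x : Rq d 4 // x + conjQ d 4 x = 0}) :
    Matrix (Fin (n+1)) (Fin (n+1)) (Rq d 4) :=
  fun i j =>
    if h : i < j then f ⟨(i,j), h⟩
    else if h' : j < i then
      (if i = Fin.last n then 2 * conjQ d 4 (f ⟨(j,i), h'⟩)
       else - conjQ d 4 (f ⟨(j,i), h'⟩))
    else if h'' : i = Fin.last n then -∑ k, (g k : Rq d 4)
    else (g (i.castPred h'') : Rq d 4)

variable {d n}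
variable (f : {p : Fin (n+1) × Fin (n+1) // p.1 < p.2} → Rq d 4)
    (g : Fin n → {x : Rq d 4 // x + conjQ d 4 x = 0})

lemma buildB_lt {i j : Fin (n+1)} (h : i < j) :
    buildB d n f g i j = f ⟨(i,j), h⟩ := dif_pos h

lemma buildB_gt {i j : Fin (n+1)} (h : j < i) :
    buildB d n f g i j =
      (if i = Fin.last n then 2 * conjQ d 4 (f ⟨(j,i), h⟩)
       else - conjQ d 4 (f ⟨(j,i), h⟩)) := by
  rw [buildB, dif_neg (asymm h), dif_pos h]

lemma buildB_diag {i : Fin (n+1)} (h : i ≠ Fin.last n) :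
    buildB d n f g i i = (g (i.castPred h) : Rq d 4) := by
  rw [buildB, dif_neg (lt_irrefl i), dif_neg (lt_irrefl i), dif_neg h]

lemma buildB_last :
    buildB d n f g (Fin.last n) (Fin.last n) = -∑ k, (g k : Rq d 4) := by
  rw [buildB, dif_neg (lt_irrefl _), dif_neg (lt_irrefl _), dif_pos rfl]

lemma sum_conj : (∑ k, (g k : Rq d 4)) + conjQ d 4 (∑ k, (g k : Rq d 4)) = 0 := by
  rw [map_sum, ← Finset.sum_add_distrib]
  exact Finset.sum_eq_zero fun k _ => (g k).prop

lemma buildB_sol :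
    buildB d n f g * Mmat (Rq d 4) n
      + Mmat (Rq d 4) n * ((buildB d n f g).map (conjQ d 4))ᵀ = 0
    ∧ (buildB d n f g).trace = 0 := by
  constructor
  · rw [sol_iff]
    intro i j
    rcases lt_trichotomy i j with hij | rfl | hij
    · have hi : i ≠ Fin.last n := Fin.ne_last_of_lt hij
      rw [buildB_lt f g hij, buildB_gt f g hij, if_neg hi]
      by_cases hj : j = Fin.last n
      · rw [if_pos hj, if_pos hj, conjQ_two_mul, conjQ_conjQ]
        ring
      · rw [if_neg hj, if_neg hj, _root_.map_neg, conjQ_conjQ]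
        ring
    · by_cases hi : i = Fin.last n
      · subst hi
        rw [buildB_last, if_pos rfl, map_neg]
        have hs := sum_conj g
        linear_combination (2 : Rq d 4) * hs
      · rw [buildB_diag f g hi, if_neg hi]
        have := (g (i.castPred hi)).prop
        linear_combination this
    · have hj : j ≠ Fin.last n := Fin.ne_last_of_lt hij
      rw [buildB_lt f g hij, buildB_gt f g hij, if_neg hj]
      by_cases hi : i = Fin.last n
      · rw [if_pos hi, if_pos hi]
        ring
      · rw [if_neg hi, if_neg hi]
        ring
  · rw [Matrix.trace]
    have h1 : ∀ k : Fin n, (buildB d n f g).diag k.castSucc = (g k : Rq d 4) := by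
      intro k
      have hk : (k.castSucc : Fin (n+1)) ≠ Fin.last n :=
        Fin.ne_last_of_lt (Fin.castSucc_lt_last k)
      rw [Matrix.diag_apply, buildB_diag f g hk, Fin.castPred_castSucc]
    rw [Fin.sum_univ_castSucc]
    simp only [h1]
    rw [Matrix.diag_apply, buildB_last]
    ring

noncomputable def mainEquiv :
    (({p : Fin (n+1) × Fin (n+1) // p.1 < p.2} → Rq d 4)
      × (Fin n → {x : Rq d 4 // x + conjQ d 4 x = 0})) ≃
    {B : Matrix (Fin (n + 1)) (Fin (n + 1)) (Rq d 4) //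
        B * Mmat (Rq d 4) n + Mmat (Rq d 4) n * (B.map (conjQ d 4))ᵀ = 0 ∧
        B.trace = 0} where
  toFun fg := ⟨buildB d n fg.1 fg.2, buildB_sol fg.1 fg.2⟩
  invFun B :=
    ⟨fun p => (B : Matrix _ _ _) p.1.1 p.1.2,
     fun k => ⟨(B : Matrix _ _ _) k.castSucc k.castSucc, by
       have h := (sol_iff d n B).mp B.prop.1 k.castSucc k.castSucc
       have hk : (k.castSucc : Fin (n+1)) ≠ Fin.last n :=
         Fin.ne_last_of_lt (Fin.castSucc_lt_last k)
       rw [if_neg hk] at h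
       linear_combination h⟩⟩
  left_inv := by
    rintro ⟨f, g⟩
    refine Prod.ext ?_ ?_
    · funext p
      exact buildB_lt f g p.2
    · funext k
      refine Subtype.ext ?_
      have hk : (k.castSucc : Fin (n+1)) ≠ Fin.last n :=
        Fin.ne_last_of_lt (Fin.castSucc_lt_last k)
      simp only
      rw [buildB_diag f g hk, Fin.castPred_castSucc]
  right_inv := by
    rintro ⟨B, hB1, hB2⟩
    refine Subtype.ext ?_
    have h := (sol_iff d n B).mp hB1
    funext i j
    simp only
    rcases lt_trichotomy i j with hij | rfl | hij
    · rw [buildB_lt _ _ hij]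
    · by_cases hi : i = Fin.last n
      · subst hi
        rw [buildB_last]
        show -∑ k : Fin n, B k.castSucc k.castSucc = B (Fin.last n) (Fin.last n)
        have htr : ∑ k : Fin n, B k.castSucc k.castSucc + B (Fin.last n) (Fin.last n) = 0 := by
          have := hB2
          rw [Matrix.trace, Fin.sum_univ_castSucc] at this
          simpa [Matrix.diag_apply] using this
        linear_combination -htr
      · rw [buildB_diag _ _ hi]
        show B (i.castPred hi).castSucc (i.castPred hi).castSucc = B i i
        rw [Fin.castSucc_castPred]
    · rw [buildB_gt _ _ hij]
      by_cases hi : i = Fin.last n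
      · rw [if_pos hi]
        subst hi
        show 2 * conjQ d 4 (B j (Fin.last n)) = B (Fin.last n) j
        have e1 := h j (Fin.last n)
        rw [if_pos rfl, if_neg (Fin.ne_last_of_lt hij)] at e1
        have e2 : conjQ d 4 (B (Fin.last n) j) = 2 * B j (Fin.last n) := by
          linear_combination e1
        refine Eq.symm ?_
        calc B (Fin.last n) j = conjQ d 4 (conjQ d 4 (B (Fin.last n) j)) := (conjQ_conjQ _).symm
          _ = conjQ d 4 (2 * B j (Fin.last n)) := by rw [e2]
          _ = 2 * conjQ d 4 (B j (Fin.last n)) := conjQ_two_mul _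
      · rw [if_neg hi]
        show - conjQ d 4 (B j i) = B i j
        have e1 := h j i
        rw [if_neg hi, if_neg (Fin.ne_last_of_lt hij)] at e1
        have e2 : conjQ d 4 (B i j) = - B j i := by linear_combination e1
        refine Eq.symm ?_
        calc B i j = conjQ d 4 (conjQ d 4 (B i j)) := (conjQ_conjQ _).symm
          _ = conjQ d 4 (- B j i) := by rw [e2]
          _ = - conjQ d 4 (B j i) := map_neg _ _

end main

noncomputable def pairsEquiv (n : ℕ) :
    {p : Fin (n+1) × Fin (n+1) // p.1 < p.2} ≃ Σ j : Fin (n+1), Fin j.val where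
  toFun x := ⟨x.1.2, ⟨x.1.1.val, x.2⟩⟩
  invFun s := ⟨(⟨s.2.val, s.2.isLt.trans s.1.isLt⟩, s.1), s.2.isLt⟩
  left_inv := by rintro ⟨⟨i, j⟩, h⟩; rfl
  right_inv := by rintro ⟨j, k⟩; rfl

lemma card_pairs (n : ℕ) :
    Nat.card {p : Fin (n+1) × Fin (n+1) // p.1 < p.2} * 2 = (n+1) * n := by
  rw [Nat.card_congr (pairsEquiv n), Nat.card_eq_fintype_card, Fintype.card_sigma]
  simp only [Fintype.card_fin]
  rw [Fin.sum_univ_eq_sum_range (fun i => i) (n+1), Finset.sum_range_id_mul_two]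
  simp


/-- For `d ≡ 1 (mod 4)` squarefree positive, the number of matrices `B` over
`R = ℤ[√-d]/(4)` with `B M + M σ(B)ᵀ = 0` and `tr B = 0` is `2^(2n²+5n)`. -/
theorem card_kernel_lie_M (d : ℤ) (hd : 0 < d) (hsf : Squarefree d) (hd4 : d % 4 = 1)
    (n : ℕ) (hn : 1 ≤ n) :
    Nat.card {B : Matrix (Fin (n + 1)) (Fin (n + 1)) (Rq d 4) //
        B * Mmat (Rq d 4) n + Mmat (Rq d 4) n * (B.map (conjQ d 4))ᵀ = 0 ∧
        B.trace = 0} = 2 ^ (2 * n ^ 2 + 5 * n) := by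
  have hfin : Finite (Rq d 4) := Finite.of_surjective (psi d) psi_bij.2
  rw [← Nat.card_congr (mainEquiv (d := d) (n := n))]
  rw [Nat.card_prod, Nat.card_fun, Nat.card_fun, card_R, card_S]
  rw [Nat.card_eq_fintype_card (α := Fin n), Fintype.card_fin]
  have hK := card_pairs n
  set K := Nat.card {p : Fin (n+1) × Fin (n+1) // p.1 < p.2} with hKdef
  rw [show (16:ℕ) = 2^4 from rfl, show (8:ℕ) = 2^3 from rfl, ← pow_mul, ← pow_mul, ← pow_add]
  congr 1
  calc 4 * K + 3 * n = 2 * (K * 2) + 3 * n := by ring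
    _ = 2 * ((n+1) * n) + 3 * n := by rw [hK]
    _ = 2 * n ^ 2 + 5 * n := by ring
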